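/- Let f, g ∈ 𝒮(ℝ), s > 0, 0 < δ < 1/4, and define R(s,ξ) = -(i/(4πs)) ∫∫ (e^{-iab/(2s)} - 1) · G(a,b) da db where G(a,b) = (2π)^{-1/2} e^{i(a+b)ξ} ∫_ℝ e^{-ixξ} g(x-b) conj(g)(x) f(x-a) dx. Then |R(s,ξ)| ≲ s^{-1-δ} ‖⟨x⟩f‖_{L²} ‖⟨x⟩g‖_{L²}², uniformly in ξ, with implicit constant depending only on δ. -/

import Mathlib

/-!
Interpolating `‖exp(iθ) - 1‖ ≤ min(2, |θ|)` bounds the phase by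
`‖exp(-iab/(2s)) - 1‖ ≤ 2^{1-2δ} s^{-δ} (|a||b|)^δ`, and `|a||b| ≤ ⟨x-a⟩²⟨x-b⟩²⟨x⟩²`
distributes the weight over the three arguments of the integrand.
After that the `x`-integral is a translation-invariant triple product, so Tonelli factorises
`∫∫∫` into `‖⟨·⟩^{2δ} f‖₁ ‖⟨·⟩^{2δ} g‖₁²`. Finally Cauchy–Schwarz gives
`‖⟨·⟩^{2δ} h‖₁ ≤ ‖⟨·⟩^{2δ-1}‖₂ ‖⟨·⟩ h‖₂`, and `⟨·⟩^{2δ-1} ∈ L²` exactly when `δ < 1/4`.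
-/

open MeasureTheory Real
open scoped ENNReal SchwartzMap

theorem le_rpow_mul_rpow_of_le_of_le {x A B δ : ℝ} (hx : 0 ≤ x) (hA : x ≤ A) (hB : x ≤ B)
    (hδ0 : 0 ≤ δ) (hδ1 : δ ≤ 1) : x ≤ A ^ (1 - δ) * B ^ δ :=
  calc x = x ^ (1 - δ) * x ^ δ := by
        rw [← rpow_add' hx (by norm_num), sub_add_cancel, Real.rpow_one]
    _ ≤ A ^ (1 - δ) * B ^ δ :=
        mul_le_mul (rpow_le_rpow hx hA (by linarith)) (rpow_le_rpow hx hB hδ0) (by positivity)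
          (rpow_nonneg (hx.trans hA) _)

theorem Complex.norm_exp_I_mul_ofReal_sub_one_le_rpow {δ : ℝ} (hδ0 : 0 ≤ δ) (hδ1 : δ ≤ 1)
    (θ : ℝ) : ‖Complex.exp (Complex.I * θ) - 1‖ ≤ 2 ^ (1 - δ) * |θ| ^ δ := by
  refine le_rpow_mul_rpow_of_le_of_le (norm_nonneg _) ?_ norm_exp_I_mul_ofReal_sub_one_le hδ0 hδ1
  calc ‖Complex.exp (Complex.I * θ) - 1‖ ≤ ‖Complex.exp (Complex.I * θ)‖ + ‖(1 : ℂ)‖ :=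
        norm_sub_le _ _
    _ = 2 := by rw [Complex.norm_exp_I_mul_ofReal, norm_one]; norm_num

theorem sq_le_one_add_sq_mul_one_add_sq (a x : ℝ) : a ^ 2 ≤ (1 + (x - a) ^ 2) * (1 + x ^ 2) := by
  -- Lagrange's identity: `a² + (1 + x (x - a))² = (1 + (x - a)²) (1 + x²)`
  nlinarith [sq_nonneg (1 + x * (x - a))]

theorem abs_mul_abs_le_one_add_sq_mul (a b x : ℝ) :
    |a| * |b| ≤ (1 + (x - a) ^ 2) * (1 + (x - b) ^ 2) * (1 + x ^ 2) := by
  have ha := sq_le_one_add_sq_mul_one_add_sq a x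
  have hb := sq_le_one_add_sq_mul_one_add_sq b x
  have hy : 1 ≤ (1 + (x - a) ^ 2) * (1 + (x - b) ^ 2) := by
    nlinarith [sq_nonneg (x - a), sq_nonneg (x - b)]
  refine (abs_le_of_sq_le_sq' ?_ (by positivity)).2
  calc (|a| * |b|) ^ 2 = a ^ 2 * b ^ 2 := by rw [mul_pow, sq_abs, sq_abs]
    _ ≤ ((1 + (x - a) ^ 2) * (1 + x ^ 2)) * ((1 + (x - b) ^ 2) * (1 + x ^ 2)) :=
        mul_le_mul ha hb (sq_nonneg b) (by positivity)
    _ = ((1 + (x - a) ^ 2) * (1 + (x - b) ^ 2)) * (1 + x ^ 2) ^ 2 := by ring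
    _ ≤ ((1 + (x - a) ^ 2) * (1 + (x - b) ^ 2)) ^ 2 * (1 + x ^ 2) ^ 2 := by gcongr; nlinarith
    _ = _ := by ring

theorem abs_mul_abs_rpow_le {δ : ℝ} (hδ : 0 ≤ δ) (a b x : ℝ) :
    (|a| * |b|) ^ δ ≤ (1 + (x - a) ^ 2) ^ δ * (1 + (x - b) ^ 2) ^ δ * (1 + x ^ 2) ^ δ := by
  rw [← mul_rpow (by positivity) (by positivity), ← mul_rpow (by positivity) (by positivity)]
  exact rpow_le_rpow (by positivity) (abs_mul_abs_le_one_add_sq_mul a b x) hδ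

section TranslationInvariant

variable {G : Type*} [AddCommGroup G] [MeasurableSpace G] [MeasurableAdd₂ G] [MeasurableNeg G]
  (μ : Measure G) [SFinite μ] [μ.IsAddLeftInvariant] [μ.IsNegInvariant]

theorem lintegral_lintegral_mul_comp_sub {P Q : G → ℝ≥0∞} (hP : Measurable P)
    (hQ : Measurable Q) :
    ∫⁻ a, ∫⁻ x, P (x - a) * Q x ∂μ ∂μ = (∫⁻ t, P t ∂μ) * ∫⁻ x, Q x ∂μ := by
  rw [lintegral_lintegral_swap ((hP.comp (measurable_snd.sub measurable_fst)).mul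
    (hQ.comp measurable_snd)).aemeasurable, ← lintegral_const_mul _ hQ]
  refine lintegral_congr fun x => ?_
  rw [lintegral_mul_const _ (by fun_prop), lintegral_sub_left_eq_self P x]

theorem lintegral_lintegral_lintegral_mul_comp_sub {P Q R : G → ℝ≥0∞} (hP : Measurable P)
    (hQ : Measurable Q) (hR : Measurable R) :
    ∫⁻ a, ∫⁻ b, ∫⁻ x, P (x - a) * Q (x - b) * R x ∂μ ∂μ ∂μ =
      (∫⁻ t, P t ∂μ) * (∫⁻ t, Q t ∂μ) * ∫⁻ x, R x ∂μ := by
  have inner (a : G) : ∫⁻ b, ∫⁻ x, P (x - a) * Q (x - b) * R x ∂μ ∂μ =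
      (∫⁻ t, Q t ∂μ) * ∫⁻ x, P (x - a) * R x ∂μ := by
    simp_rw [show ∀ x b : G, P (x - a) * Q (x - b) * R x = Q (x - b) * (P (x - a) * R x) from
      fun _ _ => by ring]
    exact lintegral_lintegral_mul_comp_sub μ hQ (by fun_prop)
  have hPR : Measurable fun a => ∫⁻ x, P (x - a) * R x ∂μ :=
    ((hP.comp (measurable_snd.sub measurable_fst)).mul
      (hR.comp measurable_snd)).lintegral_prod_right'
  rw [lintegral_congr inner, lintegral_const_mul _ hPR, lintegral_lintegral_mul_comp_sub μ hP hR]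
  ring

end TranslationInvariant

theorem eLpNorm_one_add_sq_rpow_smul_le {E : Type*} [NormedAddCommGroup E] [NormedSpace ℝ E]
    {μ : Measure ℝ} {F : ℝ → E} (hF : AEStronglyMeasurable F μ) (δ : ℝ) :
    eLpNorm (fun t => (1 + t ^ 2) ^ δ • F t) 1 μ ≤
      eLpNorm (fun t : ℝ => (1 + t ^ 2) ^ (δ - 1 / 2)) 2 μ *
        eLpNorm (fun t => √(1 + t ^ 2) • F t) 2 μ := by
  have hsplit : (fun t => (1 + t ^ 2) ^ δ • F t) =
      (fun t : ℝ => (1 + t ^ 2) ^ (δ - 1 / 2)) • fun t => √(1 + t ^ 2) • F t := by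
    ext t
    rw [Pi.smul_apply', smul_smul, sqrt_eq_rpow, ← rpow_add (by positivity), sub_add_cancel]
  have hsqrt : Continuous fun t : ℝ => √(1 + t ^ 2) := by fun_prop
  have hpow : Continuous fun t : ℝ => (1 + t ^ 2) ^ (δ - 1 / 2) :=
    Continuous.rpow_const (by fun_prop) fun t => Or.inl (by positivity)
  rw [hsplit]
  exact eLpNorm_smul_le_mul_eLpNorm (hsqrt.aestronglyMeasurable.smul hF) hpow.aestronglyMeasurable

theorem eLpNorm_one_add_sq_rpow_lt_top {δ : ℝ} (hδ : δ < 1 / 4) :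
    eLpNorm (fun t : ℝ => (1 + t ^ 2) ^ (δ - 1 / 2)) 2 volume < ⊤ := by
  have hpow : Continuous fun t : ℝ => (1 + t ^ 2) ^ (δ - 1 / 2) :=
    Continuous.rpow_const (by fun_prop) fun t => Or.inl (by positivity)
  have hint := integrable_rpow_neg_one_add_norm_sq (E := ℝ) (μ := volume) (r := 2 - 4 * δ)
    (by simp; linarith)
  refine ((memLp_two_iff_integrable_sq hpow.aestronglyMeasurable).2 <|
    hint.congr (.of_forall fun t => ?_)).eLpNorm_lt_top
  dsimp only
  rw [norm_eq_abs, sq_abs, ← rpow_mul_natCast (by positivity)]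
  congr 1
  push_cast
  ring

theorem eLpNorm_one_add_sq_rpow_ne_zero (μ : Measure ℝ) [NeZero μ] (r : ℝ) :
    eLpNorm (fun t : ℝ => (1 + t ^ 2) ^ r) 2 μ ≠ 0 := by
  have hpow : Continuous fun t : ℝ => (1 + t ^ 2) ^ r :=
    Continuous.rpow_const (by fun_prop) fun t => Or.inl (by positivity)
  rw [Ne, eLpNorm_eq_zero_iff hpow.aestronglyMeasurable two_ne_zero]
  intro h
  obtain ⟨t, ht⟩ := h.exists
  exact (rpow_pos_of_pos (by positivity) r).ne' ht

theorem SchwartzMap.eLpNorm_sqrt_one_add_sq_smul_lt_top {E F : Type*} [NormedAddCommGroup E]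
    [InnerProductSpace ℝ E] [NormedAddCommGroup F] [NormedSpace ℝ F] [MeasurableSpace E]
    [BorelSpace E] (f : 𝓢(E, F)) (p : ℝ≥0∞) (μ : Measure E) [μ.HasTemperateGrowth] :
    eLpNorm (fun x => √(1 + ‖x‖ ^ 2) • f x) p μ < ⊤ := by
  have hg := Function.hasTemperateGrowth_one_add_norm_sq_rpow (H := E) (1 / 2)
  convert (smulLeftCLM F (fun x : E => (1 + ‖x‖ ^ 2) ^ (1 / 2 : ℝ)) f).eLpNorm_lt_top p μ using 2
  ext x
  rw [smulLeftCLM_apply_apply hg, sqrt_eq_rpow]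

noncomputable def kernelG (f g : ℝ → ℂ) (ξ a b : ℝ) : ℂ :=
  (1 / √(2 * π) : ℝ) * Complex.exp (Complex.I * (a + b) * ξ) *
    ∫ x : ℝ, Complex.exp (-(Complex.I) * x * ξ) * (g (x - b) * starRingEnd ℂ (g x) * f (x - a))

noncomputable def remainderR (f g : ℝ → ℂ) (s ξ : ℝ) : ℂ :=
  -(Complex.I / (4 * π * s)) *
    ∫ a : ℝ, ∫ b : ℝ, (Complex.exp (-(Complex.I) * a * b / (2 * s)) - 1) * kernelG f g ξ a b

theorem enorm_kernelG_le (f g : ℝ → ℂ) (ξ a b : ℝ) :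
    ‖kernelG f g ξ a b‖ₑ ≤
      ENNReal.ofReal (1 / √(2 * π)) * ∫⁻ x, ‖f (x - a)‖ₑ * ‖g (x - b)‖ₑ * ‖g x‖ₑ := by
  have hphase (y : ℝ) : ‖Complex.exp (Complex.I * y)‖ₑ = 1 := Complex.enorm_exp_I_mul_ofReal y
  have hintegrand (x : ℝ) : ‖Complex.exp (-(Complex.I) * x * ξ) *
      (g (x - b) * starRingEnd ℂ (g x) * f (x - a))‖ₑ = ‖f (x - a)‖ₑ * ‖g (x - b)‖ₑ * ‖g x‖ₑ := by
    rw [show -(Complex.I) * x * ξ = Complex.I * ↑(-(x * ξ)) by push_cast; ring, enorm_mul,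
      hphase, one_mul, enorm_mul, enorm_mul, RCLike.enorm_conj]
    ring
  rw [kernelG, enorm_mul, enorm_mul, ← ofReal_norm, Complex.norm_of_nonneg (by positivity),
    show Complex.I * (a + b) * ξ = Complex.I * ↑((a + b) * ξ) by push_cast; ring, hphase, mul_one]
  gcongr
  exact (enorm_integral_le_lintegral_enorm _).trans_eq (lintegral_congr hintegrand)

theorem norm_exp_neg_I_mul_div_sub_one_le {δ s : ℝ} (hδ0 : 0 ≤ δ) (hδ1 : δ ≤ 1) (hs : 0 < s)
    (a b : ℝ) :
    ‖Complex.exp (-(Complex.I) * a * b / (2 * s)) - 1‖ ≤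
      2 ^ (1 - 2 * δ) * s ^ (-δ) * (|a| * |b|) ^ δ := by
  rw [show -(Complex.I) * a * b / (2 * s) = Complex.I * ↑(-(a * b) / (2 * s)) by push_cast; ring]
  refine (Complex.norm_exp_I_mul_ofReal_sub_one_le_rpow hδ0 hδ1 _).trans_eq ?_
  rw [abs_div, abs_neg, abs_mul, abs_of_pos (by positivity : 0 < 2 * s),
    div_rpow (by positivity) (by positivity), mul_rpow zero_le_two hs.le, rpow_neg hs.le,
    show 1 - 2 * δ = (1 - δ) - δ by ring, rpow_sub two_pos (1 - δ)]
  ring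

theorem enorm_exp_sub_one_mul_kernelG_le {δ s : ℝ} (hδ0 : 0 ≤ δ) (hδ1 : δ ≤ 1) (hs : 0 < s)
    (f g : ℝ → ℂ) (ξ a b : ℝ) :
    ‖(Complex.exp (-(Complex.I) * a * b / (2 * s)) - 1) * kernelG f g ξ a b‖ₑ ≤
      ENNReal.ofReal (2 ^ (1 - 2 * δ) / √(2 * π) * s ^ (-δ)) *
        ∫⁻ x, ‖(1 + (x - a) ^ 2) ^ δ • f (x - a)‖ₑ * ‖(1 + (x - b) ^ 2) ^ δ • g (x - b)‖ₑ *
          ‖(1 + x ^ 2) ^ δ • g x‖ₑ := by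
  have hweight (x : ℝ) :
      ENNReal.ofReal ((|a| * |b|) ^ δ) * (‖f (x - a)‖ₑ * ‖g (x - b)‖ₑ * ‖g x‖ₑ) ≤
      ‖(1 + (x - a) ^ 2) ^ δ • f (x - a)‖ₑ * ‖(1 + (x - b) ^ 2) ^ δ • g (x - b)‖ₑ *
        ‖(1 + x ^ 2) ^ δ • g x‖ₑ := by
    have hw (t : ℝ) : ‖(1 + t ^ 2) ^ δ‖ₑ = ENNReal.ofReal ((1 + t ^ 2) ^ δ) :=
      enorm_of_nonneg (by positivity)
    simp only [enorm_smul, hw]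
    calc _ ≤ ENNReal.ofReal ((1 + (x - a) ^ 2) ^ δ * (1 + (x - b) ^ 2) ^ δ * (1 + x ^ 2) ^ δ) *
          (‖f (x - a)‖ₑ * ‖g (x - b)‖ₑ * ‖g x‖ₑ) := by
          gcongr; exact abs_mul_abs_rpow_le hδ0 a b x
      _ = _ := by rw [ENNReal.ofReal_mul (by positivity), ENNReal.ofReal_mul (by positivity)]; ring
  calc _ = ‖Complex.exp (-(Complex.I) * a * b / (2 * s)) - 1‖ₑ * ‖kernelG f g ξ a b‖ₑ :=
        enorm_mul _ _
    _ ≤ ENNReal.ofReal (2 ^ (1 - 2 * δ) * s ^ (-δ) * (|a| * |b|) ^ δ) *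
          (ENNReal.ofReal (1 / √(2 * π)) * ∫⁻ x, ‖f (x - a)‖ₑ * ‖g (x - b)‖ₑ * ‖g x‖ₑ) := by
        gcongr
        · rw [← ofReal_norm]
          exact ENNReal.ofReal_le_ofReal (norm_exp_neg_I_mul_div_sub_one_le hδ0 hδ1 hs a b)
        · exact enorm_kernelG_le f g ξ a b
    _ = ENNReal.ofReal (2 ^ (1 - 2 * δ) / √(2 * π) * s ^ (-δ)) *
          ∫⁻ x, ENNReal.ofReal ((|a| * |b|) ^ δ) * (‖f (x - a)‖ₑ * ‖g (x - b)‖ₑ * ‖g x‖ₑ) := by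
        rw [lintegral_const_mul' _ _ ENNReal.ofReal_ne_top, ← mul_assoc, ← mul_assoc,
          ← ENNReal.ofReal_mul (by positivity), ← ENNReal.ofReal_mul (by positivity)]
        congr 2
        ring
    _ ≤ _ := mul_le_mul' le_rfl (lintegral_mono hweight)

theorem lintegral_lintegral_enorm_exp_sub_one_mul_kernelG_le {δ s : ℝ} (hδ0 : 0 ≤ δ)
    (hδ1 : δ ≤ 1) (hs : 0 < s) {f g : ℝ → ℂ} (hf : Measurable f) (hg : Measurable g) (ξ : ℝ) :
    ∫⁻ a : ℝ, ∫⁻ b : ℝ,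
        ‖(Complex.exp (-(Complex.I) * a * b / (2 * s)) - 1) * kernelG f g ξ a b‖ₑ ≤
      ENNReal.ofReal (2 ^ (1 - 2 * δ) / √(2 * π) * s ^ (-δ)) *
        eLpNorm (fun t => (1 + t ^ 2) ^ δ • f t) 1 volume *
        eLpNorm (fun t => (1 + t ^ 2) ^ δ • g t) 1 volume ^ 2 := by
  have hweighted {h : ℝ → ℂ} (hh : Measurable h) :
      Measurable fun t : ℝ => ‖(1 + t ^ 2) ^ δ • h t‖ₑ := by fun_prop
  calc _ ≤ ∫⁻ a : ℝ, ∫⁻ b : ℝ, ENNReal.ofReal (2 ^ (1 - 2 * δ) / √(2 * π) * s ^ (-δ)) *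
          ∫⁻ x, ‖(1 + (x - a) ^ 2) ^ δ • f (x - a)‖ₑ * ‖(1 + (x - b) ^ 2) ^ δ • g (x - b)‖ₑ *
            ‖(1 + x ^ 2) ^ δ • g x‖ₑ :=
        lintegral_mono fun a => lintegral_mono fun b =>
          enorm_exp_sub_one_mul_kernelG_le hδ0 hδ1 hs f g ξ a b
    _ = _ := by
        simp_rw [lintegral_const_mul' _ _ ENNReal.ofReal_ne_top]
        rw [lintegral_lintegral_lintegral_mul_comp_sub volume (hweighted hf) (hweighted hg)
          (hweighted hg), eLpNorm_one_eq_lintegral_enorm, eLpNorm_one_eq_lintegral_enorm]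
        ring

theorem enorm_remainderR_le {δ s : ℝ} (hδ0 : 0 ≤ δ) (hδ1 : δ ≤ 1) (hs : 0 < s) {f g : ℝ → ℂ}
    (hf : Measurable f) (hg : Measurable g) (ξ : ℝ) :
    ‖remainderR f g s ξ‖ₑ ≤
      ENNReal.ofReal (2 ^ (1 - 2 * δ) / (4 * π * √(2 * π)) * s ^ (-1 - δ)) *
        eLpNorm (fun t => (1 + t ^ 2) ^ δ • f t) 1 volume *
        eLpNorm (fun t => (1 + t ^ 2) ^ δ • g t) 1 volume ^ 2 := by
  have hprefactor : ‖-(Complex.I / (4 * π * s))‖ₑ = ENNReal.ofReal (1 / (4 * π * s)) := by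
    rw [← ofReal_norm, norm_neg, norm_div, Complex.norm_I, show (4 * π * s : ℂ) = ↑(4 * π * s) by
      push_cast; ring, Complex.norm_of_nonneg (by positivity)]
  have hs' : 1 / (4 * π * s) * (2 ^ (1 - 2 * δ) / √(2 * π) * s ^ (-δ)) =
      2 ^ (1 - 2 * δ) / (4 * π * √(2 * π)) * s ^ (-1 - δ) := by
    rw [show -1 - δ = -1 + -δ by ring, rpow_add hs, rpow_neg_one]
    field_simp
  calc _ ≤ ENNReal.ofReal (1 / (4 * π * s)) * ∫⁻ a : ℝ, ∫⁻ b : ℝ,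
        ‖(Complex.exp (-(Complex.I) * a * b / (2 * s)) - 1) * kernelG f g ξ a b‖ₑ := by
        rw [remainderR, enorm_mul, hprefactor]
        gcongr
        exact (enorm_integral_le_lintegral_enorm _).trans
          (lintegral_mono fun a => enorm_integral_le_lintegral_enorm _)
    _ ≤ _ := by
        grw [lintegral_lintegral_enorm_exp_sub_one_mul_kernelG_le hδ0 hδ1 hs hf hg ξ,
          ← mul_assoc, ← mul_assoc, ← ENNReal.ofReal_mul (by positivity), hs']

theorem stmt_10 (δ : ℝ) (hδ0 : 0 < δ) (hδ1 : δ < 1 / 4) :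
    ∃ C : ℝ, 0 < C ∧ ∀ (f g : SchwartzMap ℝ ℂ) (s : ℝ), 0 < s → ∀ ξ : ℝ,
      ‖-(Complex.I / (4 * π * s)) *
          ∫ a : ℝ, ∫ b : ℝ, (Complex.exp (-(Complex.I) * a * b / (2 * s)) - 1) *
            ((1 / Real.sqrt (2 * π) : ℝ) * Complex.exp (Complex.I * (a + b) * ξ) *
              ∫ x : ℝ, Complex.exp (-(Complex.I) * x * ξ) *
                (g (x - b) * starRingEnd ℂ (g x) * f (x - a)))‖ ≤
        C * s ^ (-1 - δ) *
          (eLpNorm (fun x : ℝ => Real.sqrt (1 + x ^ 2) • f x) 2 (volume : Measure ℝ)).toReal *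
          (eLpNorm (fun x : ℝ => Real.sqrt (1 + x ^ 2) • g x) 2 (volume : Measure ℝ)).toReal ^ 2 := by
  have hA := eLpNorm_one_add_sq_rpow_lt_top hδ1
  have hA0 := ENNReal.toReal_pos (eLpNorm_one_add_sq_rpow_ne_zero volume (δ - 1 / 2)) hA.ne
  refine ⟨2 ^ (1 - 2 * δ) / (4 * π * √(2 * π)) *
    (eLpNorm (fun t : ℝ => (1 + t ^ 2) ^ (δ - 1 / 2)) 2 volume).toReal ^ 3, by positivity,
    fun f g s hs ξ => ?_⟩
  have hN (h : 𝓢(ℝ, ℂ)) : eLpNorm (fun x : ℝ => √(1 + x ^ 2) • h x) 2 volume ≠ ⊤ := by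
    simpa [norm_eq_abs, sq_abs] using (h.eLpNorm_sqrt_one_add_sq_smul_lt_top 2 volume).ne
  have hL1 (h : 𝓢(ℝ, ℂ)) :=
    eLpNorm_one_add_sq_rpow_smul_le (μ := volume) h.continuous.aestronglyMeasurable δ
  have key := (enorm_remainderR_le hδ0.le (by linarith) hs f.continuous.measurable
    g.continuous.measurable ξ).trans (by grw [hL1 f, hL1 g])
  have hC : 0 ≤ 2 ^ (1 - 2 * δ) / (4 * π * √(2 * π)) * s ^ (-1 - δ) := by positivity
  calc _ = ‖remainderR f g s ξ‖ₑ.toReal := (toReal_enorm _).symm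
    _ ≤ _ := ENNReal.toReal_mono (by have := hA.ne; have := hN f; have := hN g; finiteness) key
    _ = _ := by
        simp only [ENNReal.toReal_mul, ENNReal.toReal_pow, ENNReal.toReal_ofReal hC]
        ring
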